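/- arXiv:1910.07103 — 2 statements merged into one kernel-verified Lean document; each statement's English description precedes it below -/
import Mathlib

section
/- Let V ⊂ H be Hilbert spaces with continuous dense embedding, A the self-adjoint positive operator on H associated with a bounded coercive bilinear form a on V with continuity constant 𝓜 and coercivity constant α ( α‖u‖²_V ≤ a(u,u) and |a(u,v)| ≤ 𝓜‖u‖_V‖v‖_V ), and (ψᵢ) an H-orthonormal basis of eigenvectors of A with eigenvalues λᵢ. Then the projection P_m v = Σ_{i=0}^m (v,ψᵢ)_H ψᵢ satisfies ‖P_m‖_{𝓛(V)} ≤ 1 + 𝓜/α for every m. -/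
open scoped RealInnerProductSpace

/-! Write `w = P_m v`. Since `a(ψᵢ, ·) = λᵢ (ψᵢ, ·)_H` and `(ψᵢ, w)_H = (ψᵢ, v)_H` for `i ≤ m`,
we get `a(w, w) = a(w, v)`. Coercivity and boundedness then give
`α ‖w‖² ≤ a(w, v) ≤ 𝓜 ‖w‖ ‖v‖`, i.e. `‖w‖ ≤ (𝓜/α) ‖v‖`, which is even better than claimed. -/

section LinearLeft

variable {V ι : Type*} [AddCommMonoid V] [Module ℝ V] {a : V → V → ℝ}

theorem apply_sum_smul_left (ha_add : ∀ u v w, a (u + v) w = a u w + a v w)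
    (ha_smul : ∀ (c : ℝ) u v, a (c • u) v = c * a u v)
    (s : Finset ι) (c : ι → ℝ) (ψ : ι → V) (u : V) :
    a (∑ i ∈ s, c i • ψ i) u = ∑ i ∈ s, c i * a (ψ i) u := by
  let f : V →ₗ[ℝ] ℝ :=
    { toFun := fun x => a x u
      map_add' := fun x y => ha_add x y u
      map_smul' := fun c x => ha_smul c x u }
  change f _ = _
  rw [map_sum]
  exact Finset.sum_congr rfl fun i _ => ha_smul _ _ _

end LinearLeft

section Coercive

variable {V : Type*} [NormedAddCommGroup V] {a : V → V → ℝ} {𝓜 α : ℝ}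

theorem bound_mul_norm_nonneg (hα : 0 ≤ α) (hbdd : ∀ u v, |a u v| ≤ 𝓜 * ‖u‖ * ‖v‖)
    (hcoer : ∀ u, α * ‖u‖ ^ 2 ≤ a u u) (v : V) : 0 ≤ 𝓜 * ‖v‖ := by
  have hvv : α * ‖v‖ ^ 2 ≤ 𝓜 * ‖v‖ * ‖v‖ :=
    (hcoer v).trans ((le_abs_self _).trans (hbdd v v))
  rcases (norm_nonneg v).eq_or_lt with hv | hv
  · simp [← hv]
  · nlinarith [mul_nonneg hα (sq_nonneg ‖v‖)]

theorem norm_le_div_mul_norm_of_apply_self_eq (hα : 0 < α)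
    (hbdd : ∀ u v, |a u v| ≤ 𝓜 * ‖u‖ * ‖v‖) (hcoer : ∀ u, α * ‖u‖ ^ 2 ≤ a u u)
    {w v : V} (h : a w w = a w v) : ‖w‖ ≤ 𝓜 / α * ‖v‖ := by
  have key : α * ‖w‖ ^ 2 ≤ 𝓜 * ‖w‖ * ‖v‖ :=
    calc α * ‖w‖ ^ 2 ≤ a w w := hcoer w
      _ = a w v := h
      _ ≤ |a w v| := le_abs_self _
      _ ≤ 𝓜 * ‖w‖ * ‖v‖ := hbdd w v
  have hαw : α * ‖w‖ ≤ 𝓜 * ‖v‖ := by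
    rcases (norm_nonneg w).eq_or_lt with hw | hw
    · simpa [← hw] using bound_mul_norm_nonneg hα.le hbdd hcoer v
    · nlinarith
  rwa [div_mul_eq_mul_div, le_div_iff₀ hα, mul_comm]

end Coercive

section Eigen

variable {V H F : Type*} [AddCommGroup V] [Module ℝ V]
  [NormedAddCommGroup H] [InnerProductSpace ℝ H] [FunLike F V H] [LinearMapClass F ℝ V H]
  {ι : F} {a : V → V → ℝ} {ψ : ℕ → V} {lam : ℕ → ℝ}

theorem apply_proj_self_eq_apply (ha_add : ∀ u v w, a (u + v) w = a u w + a v w)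
    (ha_smul : ∀ (c : ℝ) u v, a (c • u) v = c * a u v)
    (horth : Orthonormal ℝ (fun i => ι (ψ i)))
    (heig : ∀ i v, a (ψ i) v = lam i * ⟪ι (ψ i), ι v⟫) (s : Finset ℕ) (v : V) :
    let w := ∑ i ∈ s, ⟪ι (ψ i), ι v⟫ • ψ i
    a w w = a w v := by
  intro w
  have hcoeff : ∀ i ∈ s, ⟪ι (ψ i), ι w⟫ = ⟪ι (ψ i), ι v⟫ := fun i hi => by
    simpa [w, map_sum, map_smul] using horth.inner_right_sum (fun j => ⟪ι (ψ j), ι v⟫) hi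
  change a (∑ i ∈ s, _ • ψ i) w = a (∑ i ∈ s, _ • ψ i) v
  rw [apply_sum_smul_left ha_add ha_smul, apply_sum_smul_left ha_add ha_smul]
  refine Finset.sum_congr rfl fun i hi => ?_
  rw [heig, heig, hcoeff i hi]

end Eigen

theorem stmt9_general {V H : Type*}
    [NormedAddCommGroup V] [NormedSpace ℝ V]
    [NormedAddCommGroup H] [InnerProductSpace ℝ H]
    (ι : V →L[ℝ] H)
    (a : V → V → ℝ)
    (ha_add_l : ∀ u v w, a (u + v) w = a u w + a v w)
    (ha_smul_l : ∀ (c : ℝ) u v, a (c • u) v = c * a u v)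
    (𝓜 α : ℝ) (hα : 0 < α)
    (hbdd : ∀ u v, |a u v| ≤ 𝓜 * ‖u‖ * ‖v‖)
    (hcoer : ∀ u, α * ‖u‖ ^ 2 ≤ a u u)
    (ψ : ℕ → V) (lam : ℕ → ℝ)
    (horth : ∀ i j, ⟪ι (ψ i), ι (ψ j)⟫ = if i = j then (1:ℝ) else 0)
    (heig : ∀ i v, a (ψ i) v = lam i * ⟪ι (ψ i), ι v⟫)
    (m : ℕ) :
    ∀ v : V,
      ‖∑ i ∈ Finset.range (m + 1), ⟪ι (ψ i), ι v⟫ • ψ i‖ ≤ (1 + 𝓜 / α) * ‖v‖ := by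
  intro v
  have hproj := apply_proj_self_eq_apply ha_add_l ha_smul_l
    (orthonormal_iff_ite.mpr horth) heig (Finset.range (m + 1)) v
  calc _ ≤ 𝓜 / α * ‖v‖ := norm_le_div_mul_norm_of_apply_self_eq hα hbdd hcoer hproj
    _ ≤ (1 + 𝓜 / α) * ‖v‖ := by
      rw [add_mul, one_mul]
      exact le_add_of_nonneg_left (norm_nonneg v)

/-- Uniform `V`-bound for the spectral Galerkin projections: if `a` is a
bounded (constant `𝓜`) coercive (constant `α`) bilinear form on `V` whose
associated operator has an `H`-orthonormal eigenbasis `ψ` (via the embedding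
`ι : V → H`), then `‖P_m‖_{𝓛(V)} ≤ 1 + 𝓜/α` for every `m`. -/
theorem stmt9 {V H : Type*}
    [NormedAddCommGroup V] [NormedSpace ℝ V]
    [NormedAddCommGroup H] [InnerProductSpace ℝ H] [CompleteSpace H]
    (ι : V →L[ℝ] H) (hι : Function.Injective ι) (hdense : DenseRange ι)
    (a : V → V → ℝ)
    (ha_add_l : ∀ u v w, a (u + v) w = a u w + a v w)
    (ha_smul_l : ∀ (c : ℝ) u v, a (c • u) v = c * a u v)
    (ha_add_r : ∀ u v w, a u (v + w) = a u v + a u w)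
    (ha_smul_r : ∀ (c : ℝ) u v, a u (c • v) = c * a u v)
    (𝓜 α : ℝ) (hα : 0 < α)
    (hbdd : ∀ u v, |a u v| ≤ 𝓜 * ‖u‖ * ‖v‖)
    (hcoer : ∀ u, α * ‖u‖ ^ 2 ≤ a u u)
    (ψ : ℕ → V) (lam : ℕ → ℝ)
    (horth : ∀ i j, ⟪ι (ψ i), ι (ψ j)⟫ = if i = j then (1:ℝ) else 0)
    (heig : ∀ i v, a (ψ i) v = lam i * ⟪ι (ψ i), ι v⟫)
    (m : ℕ) :
    ∀ v : V,
      ‖∑ i ∈ Finset.range (m + 1), ⟪ι (ψ i), ι v⟫ • ψ i‖ ≤ (1 + 𝓜 / α) * ‖v‖ :=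
  stmt9_general ι a ha_add_l ha_smul_l 𝓜 α hα hbdd hcoer ψ lam horth heig m
end

section
/- Let F : ℝ → ℝ be continuous and T-periodic (viewing F as F(t, U(t)) evaluated along any continuous T-periodic U : ℝ → ℝⁿ), λ > 0, and K(t,τ) the periodic Green kernel for u' = −λu on [0,T]. Then for any continuous T-periodic b : ℝ → ℝⁿ, U is a T-periodic solution of U' = −λU + b(t) if and only if U(t) = ∫₀ᵀ K(t,τ) b(τ) dτ for t ∈ [0,T]; consequently a continuous T-periodic U is a solution of the quasilinear equation U' = −λU + F(t, U(t)) if and only if U is a fixed point of the operator 𝒦(U)(t) = ∫₀ᵀ K(t,τ)F(τ, U(τ))dτ. -/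
/-!
Variation of constants: every solution of `U' = -λU + b` is
`U t = e^{-λt} (U 0 + ∫₀ᵗ e^{λτ} b τ dτ)`. For `T`-periodic `b` such a solution is
`T`-periodic iff `(e^{λT} - 1) U 0 = ∫₀ᵀ e^{λτ} b τ dτ`, which fixes `U 0`
because `λT ≠ 0`. Splitting `∫₀ᵀ K(t,τ) b τ dτ` at `τ = t`, where `K` is `e^{-λt}` times
`(1 + (e^{λT} - 1)⁻¹) e^{λτ}` resp. `(e^{λT} - 1)⁻¹ e^{λτ}`, shows that it is this unique
periodic solution on `[0,T]`, and a periodic function is determined there. The quasilinear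
case is the linear one with `b t = F t (U t)`.
-/

open MeasureTheory Set Function intervalIntegral
open scoped Interval

theorem Function.Periodic.eq_of_eqOn_Ico {α G : Type*} [AddCommGroup α] [LinearOrder α]
    [IsOrderedAddMonoid α] [Archimedean α] [AddGroup G] {f g : α → G} {c : α}
    (hf : Periodic f c) (hg : Periodic g c) (hc : 0 < c) (h : EqOn f g (Ico 0 c)) : f = g := by
  funext x
  obtain ⟨y, hy, hxy⟩ := (hf.sub hg).exists_mem_Ico₀ hc x
  rw [← sub_eq_zero, ← Pi.sub_apply, hxy, Pi.sub_apply, h hy, sub_self]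

namespace PeriodicGreen

variable {E : Type*} [NormedAddCommGroup E] [NormedSpace ℝ E]

noncomputable def greenKernel (lam T t τ : ℝ) : ℝ :=
  if τ ≤ t then (1 - Real.exp (-lam * T))⁻¹ * Real.exp (-lam * (t - τ))
  else (1 - Real.exp (-lam * T))⁻¹ * Real.exp (-lam * (t + T - τ))

noncomputable def expIntegral (lam : ℝ) (b : ℝ → E) (s : ℝ) : E :=
  ∫ τ in (0 : ℝ)..s, Real.exp (lam * τ) • b τ

/-- Variation of constants: the solution of `U' = -lam • U + b` with `U 0 = C`. -/
noncomputable def solutionFrom (lam : ℝ) (b : ℝ → E) (C : E) (t : ℝ) : E :=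
  Real.exp (-lam * t) • (C + expIntegral lam b t)

noncomputable def periodicSolution (lam T : ℝ) (b : ℝ → E) : ℝ → E :=
  solutionFrom lam b ((Real.exp (lam * T) - 1)⁻¹ • expIntegral lam b T)

lemma exp_sub_one_ne_zero {x : ℝ} (hx : x ≠ 0) : Real.exp x - 1 ≠ 0 :=
  sub_ne_zero.2 fun h => hx (Real.exp_eq_one_iff _ |>.1 h)

lemma continuous_exp_mul_smul (lam : ℝ) {b : ℝ → E} (hb : Continuous b) :
    Continuous fun τ => Real.exp (lam * τ) • b τ := by
  fun_prop

lemma exp_neg_mul_smul_exp_mul_smul (lam t : ℝ) (x : E) :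
    Real.exp (-lam * t) • Real.exp (lam * t) • x = x := by
  rw [smul_smul, ← Real.exp_add, neg_mul, neg_add_cancel, Real.exp_zero, one_smul]

lemma solutionFrom_zero (lam : ℝ) (b : ℝ → E) (C : E) : solutionFrom lam b C 0 = C := by
  simp [solutionFrom, expIntegral]

lemma expIntegral_add_period {lam T : ℝ} {b : ℝ → E} (hb : Continuous b) (hbT : Periodic b T)
    (t : ℝ) :
    expIntegral lam b (t + T) =
      expIntegral lam b T + Real.exp (lam * T) • expIntegral lam b t := by
  have hg := continuous_exp_mul_smul lam hb
  have hshift : ∫ τ in T..t + T, Real.exp (lam * τ) • b τ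
      = Real.exp (lam * T) • expIntegral lam b t := by
    have hsub :=
      integral_comp_add_right (a := 0) (b := t) (fun τ => Real.exp (lam * τ) • b τ) T
    rw [zero_add] at hsub
    rw [expIntegral, ← intervalIntegral.integral_smul, ← hsub]
    refine integral_congr fun τ _ => ?_
    rw [hbT τ, smul_smul, ← Real.exp_add, mul_add, add_comm]
  rw [expIntegral, ← integral_add_adjacent_intervals (hg.intervalIntegrable 0 T)
    (hg.intervalIntegrable T (t + T)), hshift]
  rfl

lemma periodic_solutionFrom_iff {lam T : ℝ} (hlamT : lam * T ≠ 0) {b : ℝ → E}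
    (hb : Continuous b) (hbT : Periodic b T) (C : E) :
    Periodic (solutionFrom lam b C) T ↔
      C = (Real.exp (lam * T) - 1)⁻¹ • expIntegral lam b T := by
  set A := expIntegral lam b T
  have key : Real.exp (-lam * T) • (C + A) = C ↔ C = (Real.exp (lam * T) - 1)⁻¹ • A := by
    rw [neg_mul, Real.exp_neg, inv_smul_eq_iff₀ (Real.exp_pos _).ne',
      eq_inv_smul_iff₀ (exp_sub_one_ne_zero hlamT), sub_smul, one_smul]
    constructor <;> intro h <;> rw [← h] <;> abel
  have hshift : ∀ t, solutionFrom lam b C (t + T)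
      = Real.exp (-lam * t) • (Real.exp (-lam * T) • (C + A) + expIntegral lam b t) := by
    intro t
    rw [solutionFrom, expIntegral_add_period hb hbT, mul_add, Real.exp_add, mul_smul,
      ← add_assoc, smul_add (Real.exp (-lam * T)) (C + A),
      exp_neg_mul_smul_exp_mul_smul]
  constructor
  · intro h
    have h0 := h 0
    rw [zero_add, solutionFrom_zero] at h0
    exact key.1 h0
  · intro hC t
    rw [hshift, key.2 hC]
    rfl

lemma inv_one_sub_exp_neg {x : ℝ} (hx : x ≠ 0) :
    (1 - Real.exp (-x))⁻¹ = 1 + (Real.exp x - 1)⁻¹ := by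
  have h := exp_sub_one_ne_zero hx
  rw [Real.exp_neg]
  field_simp
  ring

lemma greenKernel_of_le {lam T t τ : ℝ} (hlamT : lam * T ≠ 0) (h : τ ≤ t) :
    greenKernel lam T t τ
      = Real.exp (-lam * t) * (1 + (Real.exp (lam * T) - 1)⁻¹) * Real.exp (lam * τ) := by
  rw [greenKernel, if_pos h, neg_mul lam T, inv_one_sub_exp_neg hlamT,
    show -lam * (t - τ) = -lam * t + lam * τ by ring, Real.exp_add]
  ring

lemma greenKernel_of_lt {lam T t τ : ℝ} (hlamT : lam * T ≠ 0) (h : t < τ) :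
    greenKernel lam T t τ
      = Real.exp (-lam * t) * (Real.exp (lam * T) - 1)⁻¹ * Real.exp (lam * τ) := by
  have hq := exp_sub_one_ne_zero hlamT
  rw [greenKernel, if_neg h.not_ge,
    show -lam * (t + T - τ) = -lam * t + -(lam * T) + lam * τ by ring,
    Real.exp_add, Real.exp_add, neg_mul, Real.exp_neg]
  field_simp

lemma integral_greenKernel_smul {lam T t : ℝ} (hlamT : lam * T ≠ 0) {b : ℝ → E}
    (hb : Continuous b) (ht : t ∈ Icc 0 T) :
    ∫ τ in (0 : ℝ)..T, greenKernel lam T t τ • b τ = periodicSolution lam T b t := by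
  obtain ⟨ht0, htT⟩ := ht
  set d := (Real.exp (lam * T) - 1)⁻¹
  have hg := continuous_exp_mul_smul lam hb
  have on_left : EqOn (fun τ => greenKernel lam T t τ • b τ)
      (fun τ => (Real.exp (-lam * t) * (1 + d)) • Real.exp (lam * τ) • b τ) (Ι 0 t) := by
    intro τ hτ
    rw [uIoc_of_le ht0] at hτ
    dsimp only
    rw [greenKernel_of_le hlamT hτ.2, smul_smul]
  have on_right : EqOn (fun τ => greenKernel lam T t τ • b τ)
      (fun τ => (Real.exp (-lam * t) * d) • Real.exp (lam * τ) • b τ) (Ι t T) := by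
    intro τ hτ
    rw [uIoc_of_le htT] at hτ
    dsimp only
    rw [greenKernel_of_lt hlamT hτ.1, smul_smul]
  rw [← integral_add_adjacent_intervals
      (((hg.const_smul _).intervalIntegrable 0 t).congr on_left.symm)
      (((hg.const_smul _).intervalIntegrable t T).congr on_right.symm),
    integral_congr_ae (.of_forall on_left), integral_congr_ae (.of_forall on_right),
    intervalIntegral.integral_smul, intervalIntegral.integral_smul,
    ← integral_interval_sub_left (hg.intervalIntegrable 0 T) (hg.intervalIntegrable 0 t)]
  simp only [periodicSolution, solutionFrom, expIntegral]
  module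

variable [CompleteSpace E]

lemma hasDerivAt_expIntegral (lam : ℝ) {b : ℝ → E} (hb : Continuous b) (t : ℝ) :
    HasDerivAt (expIntegral lam b) (Real.exp (lam * t) • b t) t :=
  ((continuous_exp_mul_smul lam hb).integral_hasStrictDerivAt 0 t).hasDerivAt

lemma hasDerivAt_solutionFrom (lam : ℝ) {b : ℝ → E} (hb : Continuous b) (C : E) (t : ℝ) :
    HasDerivAt (solutionFrom lam b C) (-lam • solutionFrom lam b C t + b t) t := by
  have hexp : HasDerivAt (fun t => Real.exp (-lam * t)) (Real.exp (-lam * t) * -lam) t := by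
    simpa using ((hasDerivAt_id t).const_mul (-lam)).exp
  refine (hexp.smul ((hasDerivAt_expIntegral lam hb t).const_add C)).congr_deriv ?_
  rw [exp_neg_mul_smul_exp_mul_smul, solutionFrom, mul_comm, mul_smul, add_comm (b t)]

lemma eq_solutionFrom_of_hasDerivAt (lam : ℝ) {b U : ℝ → E} (hb : Continuous b)
    (hU : ∀ t, HasDerivAt U (-lam • U t + b t) t) : U = solutionFrom lam b (U 0) := by
  funext t
  have hV : ∀ s,
      HasDerivAt (fun s => Real.exp (lam * s) • U s) (Real.exp (lam * s) • b s) s := by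
    intro s
    have hexp : HasDerivAt (fun s => Real.exp (lam * s)) (Real.exp (lam * s) * lam) s := by
      simpa using ((hasDerivAt_id s).const_mul lam).exp
    refine (hexp.smul (hU s)).congr_deriv ?_
    rw [smul_add, smul_smul, mul_neg, neg_smul]
    abel
  have hint : expIntegral lam b t = Real.exp (lam * t) • U t - U 0 := by
    simpa [expIntegral] using integral_eq_sub_of_hasDerivAt (fun s _ => hV s)
      ((continuous_exp_mul_smul lam hb).intervalIntegrable 0 t)
  rw [solutionFrom, hint, add_sub_cancel, exp_neg_mul_smul_exp_mul_smul]

lemma continuous_solutionFrom (lam : ℝ) {b : ℝ → E} (hb : Continuous b) (C : E) :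
    Continuous (solutionFrom lam b C) :=
  continuous_iff_continuousAt.2 fun t => (hasDerivAt_solutionFrom lam hb C t).continuousAt

lemma periodic_and_hasDerivAt_iff_eq_periodicSolution {lam T : ℝ} (hlamT : lam * T ≠ 0)
    {b : ℝ → E} (hb : Continuous b) (hbT : Periodic b T) (U : ℝ → E) :
    (Periodic U T ∧ ∀ t, HasDerivAt U (-lam • U t + b t) t) ↔
      U = periodicSolution lam T b := by
  constructor
  · rintro ⟨hUT, hU⟩
    have hsol := eq_solutionFrom_of_hasDerivAt lam hb hU
    rw [hsol] at hUT
    rw [hsol, (periodic_solutionFrom_iff hlamT hb hbT _).1 hUT]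
    rfl
  · rintro rfl
    exact ⟨(periodic_solutionFrom_iff hlamT hb hbT _).2 rfl, hasDerivAt_solutionFrom lam hb _⟩

theorem periodic_and_hasDerivAt_iff_eq_integral_greenKernel {lam T : ℝ} (hlam : lam ≠ 0)
    (hT : 0 < T) {b : ℝ → E} (hb : Continuous b) (hbT : Periodic b T) (U : ℝ → E) :
    (Periodic U T ∧ ∀ t, HasDerivAt U (-lam • U t + b t) t) ↔
      (Continuous U ∧ Periodic U T) ∧
        ∀ t ∈ Icc 0 T, U t = ∫ τ in (0 : ℝ)..T, greenKernel lam T t τ • b τ := by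
  have hlamT : lam * T ≠ 0 := mul_ne_zero hlam hT.ne'
  have hperiodic : Periodic (periodicSolution lam T b) T :=
    (periodic_solutionFrom_iff hlamT hb hbT _).2 rfl
  rw [periodic_and_hasDerivAt_iff_eq_periodicSolution hlamT hb hbT]
  constructor
  · rintro rfl
    exact ⟨⟨continuous_solutionFrom lam hb _, hperiodic⟩,
      fun t ht => (integral_greenKernel_smul hlamT hb ht).symm⟩
  · rintro ⟨⟨-, hUT⟩, hU⟩
    refine hUT.eq_of_eqOn_Ico hperiodic hT fun t ht => ?_
    rw [hU t (Ico_subset_Icc_self ht), integral_greenKernel_smul hlamT hb (Ico_subset_Icc_self ht)]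

end PeriodicGreen

/-- Farkas correspondence: for `λ > 0` and the periodic Green kernel `K`,
a continuous `T`-periodic `U` solves `U' = −λU + b(t)` iff it is given by
`U(t) = ∫₀ᵀ K(t,τ)b(τ)dτ` on `[0,T]`; consequently a continuous `T`-periodic
`U` solves the quasilinear equation `U' = −λU + F(t,U(t))` iff `U` is a fixed
point of the operator `𝒦(U)(t) = ∫₀ᵀ K(t,τ)F(τ,U(τ))dτ`. -/
theorem stmt19 {n : ℕ} (lam T : ℝ) (hlam : 0 < lam) (hT : 0 < T)
    (F : ℝ → EuclideanSpace ℝ (Fin n) → EuclideanSpace ℝ (Fin n))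
    (hFcont : Continuous fun p : ℝ × EuclideanSpace ℝ (Fin n) => F p.1 p.2)
    (hFper : ∀ t x, F (t + T) x = F t x) :
    (∀ b : ℝ → EuclideanSpace ℝ (Fin n), Continuous b → (∀ t, b (t + T) = b t) →
      ∀ U : ℝ → EuclideanSpace ℝ (Fin n),
        ((∀ t, U (t + T) = U t) ∧
          ∀ t, HasDerivAt U (-lam • U t + b t) t)
        ↔
        ((Continuous U ∧ ∀ t, U (t + T) = U t) ∧
          ∀ t ∈ Set.Icc (0:ℝ) T,
            U t = ∫ τ in (0:ℝ)..T,
              (if τ ≤ t then (1 - Real.exp (-lam * T))⁻¹ * Real.exp (-lam * (t - τ))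
               else (1 - Real.exp (-lam * T))⁻¹ * Real.exp (-lam * (t + T - τ)))
              • b τ))
    ∧
    (∀ U : ℝ → EuclideanSpace ℝ (Fin n),
      Continuous U → (∀ t, U (t + T) = U t) →
      ((∀ t, HasDerivAt U (-lam • U t + F t (U t)) t)
        ↔
        ∀ t ∈ Set.Icc (0:ℝ) T,
          U t = ∫ τ in (0:ℝ)..T,
            (if τ ≤ t then (1 - Real.exp (-lam * T))⁻¹ * Real.exp (-lam * (t - τ))
             else (1 - Real.exp (-lam * T))⁻¹ * Real.exp (-lam * (t + T - τ)))
            • F τ (U τ))) := by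
  refine ⟨fun b hb hbT U =>
    PeriodicGreen.periodic_and_hasDerivAt_iff_eq_integral_greenKernel hlam.ne' hT hb hbT U,
    fun U hUc hUT => ?_⟩
  have hFU : Continuous fun t => F t (U t) := hFcont.comp (continuous_id.prodMk hUc)
  have hFUT : Periodic (fun t => F t (U t)) T := fun t => by simp only [hUT t, hFper]
  have h := PeriodicGreen.periodic_and_hasDerivAt_iff_eq_integral_greenKernel hlam.ne' hT hFU hFUT U
  exact ⟨fun hU => (h.1 ⟨hUT, hU⟩).2, fun hfix => (h.2 ⟨⟨hUc, hUT⟩, hfix⟩).2⟩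
end
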